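/- Consistency implies closeness: let ρ be a density operator on H_A ⊗ H_B, M₀ = {M₀^a}, M₁ = {M₁^a} be POVMs on H_A, and N = {N^a} a POVM on H_B, all with the same outcome set. If C_ρ(M_i, N) := Σ_a tr((M_i^a ⊗ N^a)ρ) ≥ 1 − ε for i = 0,1, then Σ_a tr(sqrt(M₀^a) sqrt(M₁^a) ρ) ≥ 1 − 5ε, i.e., d_ρ(M₀, M₁) := [2 − 2 Re Σ_a tr(sqrt(M₀^a)sqrt(M₁^a)ρ)]^{1/2} ≤ sqrt(10 ε). -/

import Mathlib

open Matrix
open scoped ComplexOrder Kronecker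

/-!
Write `ρ = r rᴴ` and send a family of operators `K` to the vector `ψ K = (K a * r)ₐ`, so that
`⟪ψ K, ψ L⟫ = tr ((∑ a, (K a)ᴴ * L a) * ρ)`. The families `√M₀ᵃ ⊗ 1`, `√M₁ᵃ ⊗ 1` and `1 ⊗ √Nᵃ`
give unit vectors `u`, `v`, `w` with `d_ρ(M₀, M₁) = ‖u - v‖`. As `0 ≤ √Mᵃ ≤ 1`, we have
`Mᵃ ⊗ Nᵃ ≤ √Mᵃ ⊗ √Nᵃ`, so `Re ⟪u, w⟫ ≥ C_ρ(M₀, N) ≥ 1 - ε`, i.e. `‖u - w‖² ≤ 2ε`, and likewise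
`‖v - w‖² ≤ 2ε`; the triangle inequality gives `‖u - v‖² ≤ 8ε`.
-/

open scoped InnerProductSpace in
lemma norm_sub_sq_le_of_re_inner_ge {𝕜 E : Type*} [RCLike 𝕜] [SeminormedAddCommGroup E]
    [InnerProductSpace 𝕜 E] {u v w : E} {ε : ℝ} (hu : ‖u‖ = 1) (hv : ‖v‖ = 1) (hw : ‖w‖ = 1)
    (huw : 1 - ε ≤ RCLike.re ⟪u, w⟫_𝕜) (hvw : 1 - ε ≤ RCLike.re ⟪v, w⟫_𝕜) :
    ‖u - v‖ ^ 2 ≤ 8 * ε := by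
  have hdu : ‖u - w‖ ^ 2 ≤ 2 * ε := by rw [norm_sub_sq (𝕜 := 𝕜), hu, hw]; linarith
  have hdv : ‖w - v‖ ^ 2 ≤ 2 * ε := by
    rw [norm_sub_rev, norm_sub_sq (𝕜 := 𝕜), hv, hw]; linarith
  nlinarith [norm_sub_le_norm_sub_add_norm_sub u w v, norm_nonneg (u - v),
    sq_nonneg (‖u - w‖ - ‖w - v‖)]

lemma mul_self_le_one_of_sum_mul_self_eq_one {A α : Type*} [Semiring A] [PartialOrder A]
    [StarRing A] [StarOrderedRing A] [Fintype α] {K : α → A} (hK : ∀ a, 0 ≤ K a)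
    (hK1 : ∑ a, K a * K a = 1) (a : α) : K a * K a ≤ 1 :=
  hK1 ▸ Finset.single_le_sum (fun b _ ↦ (IsSelfAdjoint.of_nonneg (hK b)).mul_self_nonneg)
    (Finset.mem_univ a)

lemma mul_self_le_self_of_mul_self_le_one {A : Type*} [Ring A] [StarRing A] [TopologicalSpace A]
    [PartialOrder A] [StarOrderedRing A] [Algebra ℝ A]
    [ContinuousFunctionalCalculus ℝ A IsSelfAdjoint] [NonnegSpectrumClass ℝ A]
    {a : A} (ha : 0 ≤ a) (h : a * a ≤ 1) : a * a ≤ a := by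
  have hsq : a * a = cfc (fun x : ℝ ↦ x * x) a := by rw [cfc_mul .., cfc_id' ..]
  rw [hsq, ← cfc_const_one ℝ a, cfc_le_iff ..] at h
  conv_rhs => rw [← cfc_id' ℝ a]
  rw [hsq, cfc_le_iff ..]
  intro x hx
  nlinarith [h x hx, spectrum_nonneg_of_nonneg ha hx]

namespace Matrix

section Kronecker

variable {R l m n p α : Type*} [Fintype α]

lemma sum_kronecker [NonUnitalNonAssocSemiring R] (A : α → Matrix l m R) (B : Matrix n p R) :
    (∑ a, A a) ⊗ₖ B = ∑ a, A a ⊗ₖ B := by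
  ext
  simp [kroneckerMap_apply, sum_apply, Finset.sum_mul]

lemma kronecker_sum [NonUnitalNonAssocSemiring R] (A : Matrix l m R) (B : α → Matrix n p R) :
    A ⊗ₖ (∑ a, B a) = ∑ a, A ⊗ₖ B a := by
  ext
  simp [kroneckerMap_apply, sum_apply, Finset.mul_sum]

lemma conjTranspose_kronecker_mul_kronecker [CommSemiring R] [StarRing R] [Fintype l]
    [Fintype n] (A : Matrix l m R) (B : Matrix n p R) (C : Matrix l m R) (D : Matrix n p R) :
    (A ⊗ₖ B)ᴴ * (C ⊗ₖ D) = (Aᴴ * C) ⊗ₖ (Bᴴ * D) := by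
  rw [conjTranspose_kronecker, mul_kronecker_mul]

end Kronecker

section MatrixOrder

open scoped MatrixOrder

variable {𝕜 n m α : Type*} [RCLike 𝕜] [Fintype n] [DecidableEq n] [Fintype m] [DecidableEq m]
  [Fintype α]

lemma trace_mul_nonneg {A B : Matrix n n 𝕜} (hA : 0 ≤ A) (hB : 0 ≤ B) : 0 ≤ (A * B).trace := by
  obtain ⟨b, rfl⟩ := CStarAlgebra.nonneg_iff_eq_star_mul_self.mp hB
  rw [← Matrix.mul_assoc, trace_mul_cycle]
  exact (star_right_conjugate_nonneg hA b).posSemidef.trace_nonneg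

lemma trace_mul_le_trace_mul {A B ρ : Matrix n n 𝕜} (hAB : A ≤ B) (hρ : 0 ≤ ρ) :
    (A * ρ).trace ≤ (B * ρ).trace := by
  simpa [Matrix.sub_mul] using trace_mul_nonneg (sub_nonneg.2 hAB) hρ

lemma mul_self_kronecker_mul_self_le {s : Matrix n n 𝕜} {t : Matrix m m 𝕜} (hs : 0 ≤ s)
    (hs1 : s * s ≤ 1) (ht : 0 ≤ t) (ht1 : t * t ≤ 1) : (s * s) ⊗ₖ (t * t) ≤ s ⊗ₖ t := by
  have hss : 0 ≤ s - s * s := sub_nonneg.2 (mul_self_le_self_of_mul_self_le_one hs hs1)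
  have htt : 0 ≤ t - t * t := sub_nonneg.2 (mul_self_le_self_of_mul_self_le_one ht ht1)
  calc (s * s) ⊗ₖ (t * t)
      ≤ (s * s) ⊗ₖ (t * t) + ((s * s) ⊗ₖ (t - t * t) + (s - s * s) ⊗ₖ t) :=
        le_add_of_nonneg_right <| add_nonneg
          ((IsSelfAdjoint.of_nonneg hs).mul_self_nonneg.posSemidef.kronecker htt.posSemidef).nonneg
          (hss.posSemidef.kronecker ht.posSemidef).nonneg
    _ = s ⊗ₖ t := by
      rw [← add_assoc, ← kronecker_add, add_sub_cancel, ← add_kronecker, add_sub_cancel]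

lemma sum_trace_kronecker_mul_le {M s : α → Matrix n n 𝕜} {N t : α → Matrix m m 𝕜}
    {ρ : Matrix (n × m) (n × m) 𝕜} (hs : ∀ a, 0 ≤ s a) (hsM : ∀ a, s a * s a = M a)
    (hM : ∑ a, M a = 1) (ht : ∀ a, 0 ≤ t a) (htN : ∀ a, t a * t a = N a) (hN : ∑ a, N a = 1)
    (hρ : 0 ≤ ρ) : ∑ a, ((M a ⊗ₖ N a) * ρ).trace ≤ ((∑ a, s a ⊗ₖ t a) * ρ).trace := by
  simp only [← hsM, ← htN] at hM hN ⊢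
  rw [Finset.sum_mul, trace_sum]
  exact Finset.sum_le_sum fun a _ ↦ trace_mul_le_trace_mul
    (mul_self_kronecker_mul_self_le (hs a) (mul_self_le_one_of_sum_mul_self_eq_one hs hM a) (ht a)
      (mul_self_le_one_of_sum_mul_self_eq_one ht hN a)) hρ

end MatrixOrder

section FamilyVec

open scoped InnerProductSpace

variable {ι κ α : Type*} [Fintype ι] [Fintype κ] [Fintype α]

noncomputable def familyVec (r : Matrix ι κ ℂ) (K : α → Matrix ι ι ℂ) :
    EuclideanSpace ℂ (α × κ × ι) :=
  WithLp.toLp 2 fun x ↦ vec (K x.1 * r) x.2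

lemma inner_familyVec (r : Matrix ι κ ℂ) (K L : α → Matrix ι ι ℂ) :
    ⟪familyVec r K, familyVec r L⟫_ℂ = ((∑ a, (K a)ᴴ * L a) * (r * rᴴ)).trace := by
  rw [PiLp.inner_apply, Fintype.sum_prod_type, Finset.sum_mul, trace_sum]
  refine Finset.sum_congr rfl fun a _ ↦ ?_
  rw [← Matrix.mul_assoc, trace_mul_comm, ← Matrix.mul_assoc, ← Matrix.mul_assoc,
    ← conjTranspose_mul, Matrix.mul_assoc, ← star_vec_dotProduct_vec]
  simp [familyVec, dotProduct, mul_comm]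

lemma norm_familyVec [DecidableEq ι] {r : Matrix ι κ ℂ} (hr : (r * rᴴ).trace = 1)
    {K : α → Matrix ι ι ℂ} (hK : ∑ a, (K a)ᴴ * K a = 1) : ‖familyVec r K‖ = 1 := by
  rw [norm_eq_sqrt_re_inner (𝕜 := ℂ), inner_familyVec, hK, Matrix.one_mul, hr]
  simp

variable {n : Type*} [Fintype n] [DecidableEq n]

lemma inner_familyVec_kronecker_one (r : Matrix (ι × n) κ ℂ) {s : α → Matrix ι ι ℂ}
    (hs : ∀ a, (s a).IsHermitian) (s' : α → Matrix ι ι ℂ) :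
    ⟪familyVec r fun a ↦ s a ⊗ₖ (1 : Matrix n n ℂ), familyVec r fun a ↦ s' a ⊗ₖ 1⟫_ℂ =
      ∑ a, (((s a * s' a) ⊗ₖ (1 : Matrix n n ℂ)) * (r * rᴴ)).trace := by
  simp only [inner_familyVec, conjTranspose_kronecker_mul_kronecker, (hs _).eq, conjTranspose_one,
    Matrix.one_mul, Finset.sum_mul, trace_sum]

variable [DecidableEq ι]

lemma norm_familyVec_kronecker_one {r : Matrix (ι × n) κ ℂ} (hr : (r * rᴴ).trace = 1)
    {M s : α → Matrix ι ι ℂ} (hs : ∀ a, (s a).IsHermitian) (hsM : ∀ a, s a * s a = M a)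
    (hM : ∑ a, M a = 1) : ‖familyVec r fun a ↦ s a ⊗ₖ (1 : Matrix n n ℂ)‖ = 1 :=
  norm_familyVec hr <| by
    simp only [conjTranspose_kronecker_mul_kronecker, (hs _).eq, hsM, ← sum_kronecker, hM,
      conjTranspose_one, Matrix.one_mul, one_kronecker_one]

lemma norm_familyVec_one_kronecker {r : Matrix (ι × n) κ ℂ} (hr : (r * rᴴ).trace = 1)
    {N t : α → Matrix n n ℂ} (ht : ∀ a, (t a).IsHermitian) (htN : ∀ a, t a * t a = N a)
    (hN : ∑ a, N a = 1) : ‖familyVec r fun a ↦ (1 : Matrix ι ι ℂ) ⊗ₖ t a‖ = 1 :=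
  norm_familyVec hr <| by
    simp only [conjTranspose_kronecker_mul_kronecker, (ht _).eq, htN, ← kronecker_sum, hN,
      conjTranspose_one, Matrix.one_mul, one_kronecker_one]

open scoped MatrixOrder in
lemma re_sum_trace_kronecker_mul_le_re_inner_familyVec (r : Matrix (ι × n) κ ℂ)
    {M s : α → Matrix ι ι ℂ} (hs : ∀ a, 0 ≤ s a) (hsM : ∀ a, s a * s a = M a)
    (hM : ∑ a, M a = 1) {N t : α → Matrix n n ℂ} (ht : ∀ a, 0 ≤ t a)
    (htN : ∀ a, t a * t a = N a) (hN : ∑ a, N a = 1) :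
    (∑ a, ((M a ⊗ₖ N a) * (r * rᴴ)).trace).re ≤ RCLike.re
      ⟪familyVec r fun a ↦ s a ⊗ₖ (1 : Matrix n n ℂ),
        familyVec r fun a ↦ (1 : Matrix ι ι ℂ) ⊗ₖ t a⟫_ℂ := by
  simp only [inner_familyVec, conjTranspose_kronecker_mul_kronecker, (hs _).posSemidef.1.eq,
    conjTranspose_one, Matrix.one_mul, Matrix.mul_one]
  exact (Complex.le_def.mp <| sum_trace_kronecker_mul_le hs hsM hM ht htN hN
    (posSemidef_self_mul_conjTranspose r).nonneg).1

end FamilyVec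

end Matrix

theorem stmt_10_general {nA nB : ℕ} {α : Type*} [Fintype α]
    (ρ : Matrix (Fin nA × Fin nB) (Fin nA × Fin nB) ℂ)
    (hρ : ρ.PosSemidef) (hρtr : ρ.trace = 1)
    (M₀ M₁ : α → Matrix (Fin nA) (Fin nA) ℂ) (N : α → Matrix (Fin nB) (Fin nB) ℂ)
    (hM₀1 : ∑ a, M₀ a = 1)
    (hM₁1 : ∑ a, M₁ a = 1)
    (hN : ∀ a, (N a).PosSemidef) (hN1 : ∑ a, N a = 1)
    -- positive semidefinite square roots of the POVM elements
    (s₀ s₁ : α → Matrix (Fin nA) (Fin nA) ℂ)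
    (hs₀ : ∀ a, (s₀ a).PosSemidef) (hs₀2 : ∀ a, s₀ a * s₀ a = M₀ a)
    (hs₁ : ∀ a, (s₁ a).PosSemidef) (hs₁2 : ∀ a, s₁ a * s₁ a = M₁ a)
    (ε : ℝ)
    (hc₀ : (∑ a, ((M₀ a ⊗ₖ N a) * ρ).trace).re ≥ 1 - ε)
    (hc₁ : (∑ a, ((M₁ a ⊗ₖ N a) * ρ).trace).re ≥ 1 - ε) :
    (∑ a, (((s₀ a * s₁ a) ⊗ₖ (1 : Matrix (Fin nB) (Fin nB) ℂ)) * ρ).trace).re ≥ 1 - 5 * ε ∧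
    Real.sqrt (2 - 2 * (∑ a, (((s₀ a * s₁ a) ⊗ₖ (1 : Matrix (Fin nB) (Fin nB) ℂ)) * ρ).trace).re)
      ≤ Real.sqrt (10 * ε) := by
  open scoped MatrixOrder in
  · obtain ⟨r, rfl⟩ : ∃ r, ρ = r * rᴴ := CStarAlgebra.nonneg_iff_eq_mul_star_self.mp hρ.nonneg
    obtain ⟨t, ht, htN⟩ : ∃ t : α → Matrix (Fin nB) (Fin nB) ℂ,
        (∀ a, 0 ≤ t a) ∧ ∀ a, t a * t a = N a :=
      ⟨fun a ↦ CFC.sqrt (N a), fun a ↦ CFC.sqrt_nonneg _,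
        fun a ↦ CFC.sqrt_mul_sqrt_self _ (hN a).nonneg⟩
    set u := familyVec r fun a ↦ s₀ a ⊗ₖ (1 : Matrix (Fin nB) (Fin nB) ℂ)
    set v := familyVec r fun a ↦ s₁ a ⊗ₖ (1 : Matrix (Fin nB) (Fin nB) ℂ)
    set w := familyVec r fun a ↦ (1 : Matrix (Fin nA) (Fin nA) ℂ) ⊗ₖ t a
    have hu : ‖u‖ = 1 := norm_familyVec_kronecker_one hρtr (hs₀ · |>.1) hs₀2 hM₀1
    have hv : ‖v‖ = 1 := norm_familyVec_kronecker_one hρtr (hs₁ · |>.1) hs₁2 hM₁1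
    have hw : ‖w‖ = 1 := norm_familyVec_one_kronecker hρtr (ht · |>.posSemidef.1) htN hN1
    have hd : ‖u - v‖ ^ 2 ≤ 8 * ε := norm_sub_sq_le_of_re_inner_ge hu hv hw
      (hc₀.le.trans <| re_sum_trace_kronecker_mul_le_re_inner_familyVec r
        (hs₀ · |>.nonneg) hs₀2 hM₀1 ht htN hN1)
      (hc₁.le.trans <| re_sum_trace_kronecker_mul_le_re_inner_familyVec r
        (hs₁ · |>.nonneg) hs₁2 hM₁1 ht htN hN1)
    have hX : ‖u - v‖ ^ 2 = 2 - 2 * (∑ a, (((s₀ a * s₁ a) ⊗ₖ (1 : Matrix (Fin nB) (Fin nB) ℂ))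
        * (r * rᴴ)).trace).re := by
      rw [norm_sub_sq (𝕜 := ℂ), hu, hv, inner_familyVec_kronecker_one r (hs₀ · |>.1),
        RCLike.re_to_complex]
      ring
    have hε : 0 ≤ ε := by nlinarith [sq_nonneg ‖u - v‖]
    exact ⟨by linarith, Real.sqrt_le_sqrt (by linarith)⟩

/-- consistency implies closeness: if the POVMs `M₀` and `M₁` on
`H_A` are each `ε`-consistent with the POVM `N` on `H_B` with respect to `ρ`,
then `Σ_a tr(√(M₀^a) √(M₁^a) ρ) ≥ 1 − 5ε`, i.e.
`d_ρ(M₀, M₁) ≤ sqrt (10 ε)`. -/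
theorem stmt_10 {nA nB : ℕ} {α : Type*} [Fintype α]
    (ρ : Matrix (Fin nA × Fin nB) (Fin nA × Fin nB) ℂ)
    (hρ : ρ.PosSemidef) (hρtr : ρ.trace = 1)
    (M₀ M₁ : α → Matrix (Fin nA) (Fin nA) ℂ) (N : α → Matrix (Fin nB) (Fin nB) ℂ)
    (hM₀ : ∀ a, (M₀ a).PosSemidef) (hM₀1 : ∑ a, M₀ a = 1)
    (hM₁ : ∀ a, (M₁ a).PosSemidef) (hM₁1 : ∑ a, M₁ a = 1)
    (hN : ∀ a, (N a).PosSemidef) (hN1 : ∑ a, N a = 1)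
    -- positive semidefinite square roots of the POVM elements
    (s₀ s₁ : α → Matrix (Fin nA) (Fin nA) ℂ)
    (hs₀ : ∀ a, (s₀ a).PosSemidef) (hs₀2 : ∀ a, s₀ a * s₀ a = M₀ a)
    (hs₁ : ∀ a, (s₁ a).PosSemidef) (hs₁2 : ∀ a, s₁ a * s₁ a = M₁ a)
    (ε : ℝ)
    (hc₀ : (∑ a, ((M₀ a ⊗ₖ N a) * ρ).trace).re ≥ 1 - ε)
    (hc₁ : (∑ a, ((M₁ a ⊗ₖ N a) * ρ).trace).re ≥ 1 - ε) :
    (∑ a, (((s₀ a * s₁ a) ⊗ₖ (1 : Matrix (Fin nB) (Fin nB) ℂ)) * ρ).trace).re ≥ 1 - 5 * ε ∧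
    Real.sqrt (2 - 2 * (∑ a, (((s₀ a * s₁ a) ⊗ₖ (1 : Matrix (Fin nB) (Fin nB) ℂ)) * ρ).trace).re)
      ≤ Real.sqrt (10 * ε) :=
  stmt_10_general ρ hρ hρtr M₀ M₁ N hM₀1 hM₁1 hN hN1 s₀ s₁ hs₀ hs₀2 hs₁ hs₁2 ε hc₀ hc₁
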